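/- arXiv:math/0112275 — 2 statements merged into one kernel-verified Lean document; each statement's English description precedes it below -/
import Mathlib

section
/- Let W be the standard π-free resolution of ℤ/p (π = ℤ/p cyclic of prime order p): W_i is free over ℤ/p[π] on one generator e_i for i ≥ 0, with d(e_{2i−1}) = T·e_{2i−2} and d(e_{2i}) = N·e_{2i−1} (where N = 1+α+…+α^{p−1}, T = α−1). Define the coproduct ψ(e_{2i−1}) = Σ_{j+k=i} e_{2j} ⊗ e_{2k−1} + Σ_{j+k=i} e_{2j−1} ⊗ α·e_{2k}, and ψ(e_{2i}) = Σ_{j+k=i} e_{2j} ⊗ e_{2k} + Σ_{j+k=i+1} Σ_{0≤r<s<p} α^r e_{2j−1} ⊗ α^s e_{2k−1}. Then ψ is a chain map: d_{W⊗W} ∘ ψ = ψ ∘ d_W, where π acts diagonally on W ⊗ W. -/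
/-!
Componentwise, the chain-map identity splits by the parities of `a` and `b` into four identities
in `ℤ/p[π] ⊗ ℤ/p[π]` between `α`, `T = α − 1`, `N`, `Δ(N) = Σ_j α^j ⊗ α^j` and the staircase
`S = Σ_{r<s<p} α^r ⊗ α^s`. Summing geometric series in one tensor factor telescopes the staircase:
`(T ⊗ 1)·S = Δ(N) − 1 ⊗ N`, and, using `α^p = 1`, `(1 ⊗ T)·S = N ⊗ 1 − Δ(N)·(1 ⊗ α)`.
The remaining cases follow from `α ⊗ α − 1 = (T ⊗ 1)(1 ⊗ α) + 1 ⊗ T`.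
-/

open scoped TensorProduct
open Finset

/-- The group algebra `ℤ/p[π]` for `π = ℤ/p` cyclic of order `p`. -/
abbrev Rp (p : ℕ) : Type := MonoidAlgebra (ZMod p) (Multiplicative (ZMod p))

/-- The generator `α` of `π` inside `ℤ/p[π]`. -/
noncomputable def alphaP (p : ℕ) : Rp p :=
  MonoidAlgebra.of (ZMod p) (Multiplicative (ZMod p)) (Multiplicative.ofAdd (1 : ZMod p))

/-- The norm element `N = 1 + α + … + α^{p−1}`. -/
noncomputable def NormP (p : ℕ) : Rp p := ∑ j ∈ range p, alphaP p ^ j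

/-- The element `T = α − 1`. -/
noncomputable def TP (p : ℕ) : Rp p := alphaP p - 1

/-- Degree-`n` part of `W ⊗ W` lives in copies of `ℤ/p[π] ⊗_{ℤ/p} ℤ/p[π]`. -/
abbrev TPp (p : ℕ) := Rp p ⊗[ZMod p] Rp p

/-- The coefficient `c_m` with `d(e_m) = c_m · e_{m−1}` in the standard resolution `W`:
`d(e_{2i−1}) = T·e_{2i−2}` and `d(e_{2i}) = N·e_{2i−1}`. -/
noncomputable def cCoeff (p m : ℕ) : Rp p := if m % 2 = 1 then TP p else NormP p

/-- The image of `c_m` under the diagonal action on `W ⊗ W`: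
`Δ(T) = α⊗α − 1⊗1` and `Δ(N) = Σ_j α^j ⊗ α^j`. -/
noncomputable def cDiag (p m : ℕ) : TPp p :=
  if m % 2 = 1 then alphaP p ⊗ₜ[ZMod p] alphaP p - 1
  else ∑ j ∈ range p, (alphaP p ^ j) ⊗ₜ[ZMod p] (alphaP p ^ j)

/-- The coefficient of `e_a ⊗ e_b` in `ψ(e_{a+b})`:
`1⊗1` on components `e_{2j} ⊗ e_{2k}` and `e_{2j} ⊗ e_{2k−1}`, `1 ⊗ α` on components
`e_{2j−1} ⊗ e_{2k}`, and `Σ_{0≤r<s<p} α^r ⊗ α^s` on components `e_{2j−1} ⊗ e_{2k−1}`. -/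
noncomputable def psiCoeff (p a b : ℕ) : TPp p :=
  if a % 2 = 0 then 1
  else if b % 2 = 0 then (1 : Rp p) ⊗ₜ[ZMod p] alphaP p
  else ∑ r ∈ range p, ∑ s ∈ Ioo r p, (alphaP p ^ r) ⊗ₜ[ZMod p] (alphaP p ^ s)

open TensorProduct Algebra.TensorProduct

section Staircase

variable (R : Type*) {A : Type*} [CommSemiring R] [Ring A] [Algebra R A]

noncomputable def staircase (x : A) (p : ℕ) : A ⊗[R] A :=
  ∑ r ∈ range p, ∑ s ∈ Ioo r p, (x ^ r) ⊗ₜ[R] (x ^ s)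

variable {R}

theorem tmul_self_sub_one_eq (x : A) :
    x ⊗ₜ[R] x - 1 = ((x - 1) ⊗ₜ[R] (1 : A)) * ((1 : A) ⊗ₜ x) + (1 : A) ⊗ₜ (x - 1) := by
  rw [tmul_mul_tmul, one_mul, mul_one, sub_tmul, tmul_sub, one_def]
  abel

theorem sub_one_tmul_one_mul_staircase (x : A) (p : ℕ) :
    ((x - 1) ⊗ₜ[R] (1 : A)) * staircase R x p
      = ∑ j ∈ range p, (x ^ j) ⊗ₜ[R] (x ^ j) - (1 : A) ⊗ₜ ∑ j ∈ range p, x ^ j := by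
  have hswap : staircase R x p = ∑ s ∈ range p, ∑ r ∈ range s, (x ^ r) ⊗ₜ[R] (x ^ s) := by
    unfold staircase
    exact sum_comm' fun r s ↦ by simp only [mem_range, mem_Ioo]; omega
  simp_rw [hswap, mul_sum, tmul_mul_tmul, one_mul, ← sum_tmul, ← mul_sum, mul_geom_sum, sub_tmul,
    sum_sub_distrib, tmul_sum]

theorem one_tmul_sub_one_mul_staircase {x : A} {p : ℕ} (hx : x ^ p = 1) :
    ((1 : A) ⊗ₜ[R] (x - 1)) * staircase R x p
      = (∑ j ∈ range p, x ^ j) ⊗ₜ[R] (1 : A)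
        - (∑ j ∈ range p, (x ^ j) ⊗ₜ[R] (x ^ j)) * ((1 : A) ⊗ₜ x) := by
  have htail (r : ℕ) (hr : r ∈ range p) : (x - 1) * ∑ s ∈ Ioo r p, x ^ s = 1 - x ^ (r + 1) := by
    rw [← Ico_add_one_left_eq_Ioo, sum_Ico_eq_sub _ (show r + 1 ≤ p from mem_range.mp hr),
      mul_sub, mul_geom_sum, mul_geom_sum, hx, sub_sub_sub_cancel_right]
  simp_rw [staircase, mul_sum, tmul_mul_tmul, one_mul, ← tmul_sum, ← mul_sum]
  rw [sum_congr rfl fun r hr ↦ congrArg _ (htail r hr)]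
  simp_rw [sum_mul, tmul_mul_tmul, mul_one, ← pow_succ, tmul_sub, sum_sub_distrib, sum_tmul]

end Staircase

theorem tmul_self_sub_one_mul_staircase {R A : Type*} [CommSemiring R] [CommRing A]
    [Algebra R A] {x : A} {p : ℕ} (hx : x ^ p = 1) :
    (x ⊗ₜ[R] x - 1) * staircase R x p
      = (∑ j ∈ range p, x ^ j) ⊗ₜ[R] 1 - ((1 : A) ⊗ₜ ∑ j ∈ range p, x ^ j) * ((1 : A) ⊗ₜ x) := by
  rw [tmul_self_sub_one_eq, add_mul, mul_right_comm, sub_one_tmul_one_mul_staircase,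
    one_tmul_sub_one_mul_staircase hx]
  ring

theorem alphaP_pow_self (p : ℕ) : alphaP p ^ p = 1 := by
  rw [alphaP, ← map_pow, ← ofAdd_nsmul, nsmul_one, ZMod.natCast_self, ofAdd_zero, map_one]

theorem psi_chain_map_general (p : ℕ) (n a b : ℕ) (hab : a + b = n) :
    cDiag p (n + 1) * psiCoeff p a b
      = (cCoeff p (a + 1) ⊗ₜ[ZMod p] (1 : Rp p)) * psiCoeff p (a + 1) b
        + ((-1 : ℤ) ^ a) • (((1 : Rp p) ⊗ₜ[ZMod p] cCoeff p (b + 1)) * psiCoeff p a (b + 1)) := by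
  subst hab
  have hα := alphaP_pow_self p
  rcases Nat.mod_two_eq_zero_or_one a with ha | ha <;>
    rcases Nat.mod_two_eq_zero_or_one b with hb | hb <;>
    simp only [cDiag, cCoeff, psiCoeff, TP, NormP, ← staircase.eq_1, Nat.add_mod (a + b) 1,
      Nat.add_mod a b, Nat.add_mod a 1, Nat.add_mod b 1, neg_one_pow_eq_pow_mod_two (n := a), ha,
      hb, Nat.reduceAdd, Nat.reduceMod, one_ne_zero, zero_ne_one, ↓reduceIte, pow_zero, pow_one,
      one_smul, neg_smul, mul_one, ← sub_eq_add_neg]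
  · exact tmul_self_sub_one_eq _
  · rw [sub_one_tmul_one_mul_staircase, sub_add_cancel]
  · rw [one_tmul_sub_one_mul_staircase hα, sub_sub_cancel]
  · exact tmul_self_sub_one_mul_staircase hα

/-- `ψ` is a chain map `d_{W⊗W} ∘ ψ = ψ ∘ d_W`, stated componentwise on the generator
`e_{n+1}`: the `(a,b)`-component (`a + b = n`) of `ψ(d e_{n+1}) = Δ(c_{n+1})·ψ(e_n)` agrees
with that of `d_{W⊗W}(ψ(e_{n+1}))`, which receives `(c_{a+1} ⊗ 1)` times the
`(a+1,b)`-coefficient plus `(−1)^a (1 ⊗ c_{b+1})` times the `(a,b+1)`-coefficient. -/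
theorem psi_chain_map (p : ℕ) [Fact (Nat.Prime p)] (n a b : ℕ) (hab : a + b = n) :
    cDiag p (n + 1) * psiCoeff p a b
      = (cCoeff p (a + 1) ⊗ₜ[ZMod p] (1 : Rp p)) * psiCoeff p (a + 1) b
        + ((-1 : ℤ) ^ a) • (((1 : Rp p) ⊗ₜ[ZMod p] cCoeff p (b + 1)) * psiCoeff p a (b + 1)) :=
  psi_chain_map_general p n a b hab
end

section
/- Let p be an odd prime, t > 0, b an integer, q = 2b − 2(1 + p + … + p^{t−1}) and m = (p−1)/2. If 0 ≤ j < b, then pj − b − m·(2b − 2(1+p+…+p^{t−1})) = pj − b − (p−1)(b − (1+…+p^{t−1})), and if this quantity is ≥ 0 then C((b−j)+(pj−b−mq), b−j) ≡ 0 (mod p). -/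
lemma key (p : ℕ) (hp : Nat.Prime p) : ∀ t k : ℕ, 1 ≤ k → p * k ≤ p ^ t - 1 →
    p ∣ Nat.choose (p ^ t - 1 - (p - 1) * k) k := by
  have : Fact p.Prime := ⟨hp⟩
  have hp1 : 1 < p := hp.one_lt
  intro t
  induction t with
  | zero => intro k hk h; simp at h; omega
  | succ t ih =>
    intro k hk h
    set n : ℕ := p ^ (t+1) - 1 - (p - 1) * k with hn
    have hpt : 1 ≤ p ^ (t+1) := Nat.one_le_pow _ _ (by omega)
    have hpt' : 1 ≤ p ^ t := Nat.one_le_pow _ _ (by omega)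
    have hpow : p ^ (t+1) = p * p ^ t := by ring
    have hkb : k ≤ p ^ t - 1 := by
      by_contra hc
      push_neg at hc
      have : p * (p ^ t) ≤ p * k := Nat.mul_le_mul_left p (by omega)
      omega
    have hkp : (p-1) * k ≤ p ^ (t+1) - 1 := by
      have h1 : (p-1) * k ≤ p * k := Nat.mul_le_mul_right k (by omega)
      omega
    have hmod := Choose.choose_modEq_choose_mod_mul_choose_div_nat (n := n) (k := k) (p := p)
    set r : ℕ := k % p with hr
    set k' : ℕ := k / p with hk'
    have hkdiv : k = p * k' + r := (Nat.div_add_mod k p).symm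
    have hrp : r < p := Nat.mod_lt _ (by omega)
    have ekZ : (k : ℤ) = p * k' + r := by exact_mod_cast hkdiv
    have e_n : (n:ℤ) = (p:ℤ)^(t+1) - 1 - ((p:ℤ)-1)*k := by
      rw [hn]
      push_cast [hkp, hpt, hp1.le]
      ring
    rcases Nat.lt_or_ge r 1 with hk0 | hk0
    · -- r = 0 case
      have hr0 : r = 0 := by omega
      have hk'1 : 1 ≤ k' := by
        rcases Nat.eq_zero_or_pos k' with h0 | h0
        · rw [h0] at hkdiv; omega
        · exact h0
      have hk'b : p * k' ≤ p ^ t - 1 := by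
        by_contra hc
        push_neg at hc
        have h2 : p * (p ^ t) ≤ p * (p * k') := Nat.mul_le_mul_left p (by omega)
        have h3 : p * k = p * (p * k') := by rw [hkdiv, hr0]; ring
        omega
      have hk'b2 : (p-1) * k' ≤ p ^ t - 1 := by
        have h1 : (p-1) * k' ≤ p * k' := Nat.mul_le_mul_right k' (by omega)
        omega
      set n' : ℕ := p ^ t - 1 - (p - 1) * k' with hn'
      have e_n' : (n':ℤ) = (p:ℤ)^t - 1 - ((p:ℤ)-1)*k' := by
        rw [hn']
        push_cast [hk'b2, hpt', hp1.le]
        ring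
      have hdecompZ : (n:ℤ) = ((p:ℤ) - 1) + p * n' := by
        rw [e_n, e_n', ekZ, hr0]
        push_cast
        ring
      have hdecomp : n = (p - 1) + p * n' := by
        have h2 : (((p - 1) + p * n' : ℕ) : ℤ) = ((p:ℤ) - 1) + p * n' := by
          push_cast [hp1.le]; ring
        exact Nat.cast_inj.mp (hdecompZ.trans h2.symm)
      have hnmod : n % p = p - 1 := by
        rw [hdecomp, Nat.add_mul_mod_self_left, Nat.mod_eq_of_lt (by omega)]
      have hndiv : n / p = n' := by
        rw [hdecomp, Nat.add_mul_div_left _ _ (by omega : 0 < p),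
          Nat.div_eq_of_lt (by omega), zero_add]
      have hkmod : r = 0 := hr0
      have hkdivp : k / p = k' := rfl
      rw [hnmod, hndiv, hr0, Nat.choose_zero_right, one_mul] at hmod
      have ih' := ih k' hk'1 hk'b
      exact Nat.modEq_zero_iff_dvd.mp
        (hmod.trans (Nat.modEq_zero_iff_dvd.mpr ih'))
    · -- r ≥ 1 case
      have hAge : (p-1) * k' + r ≤ p ^ t - 1 := by
        have h2 : (p-1) * k' + r ≤ p * k' + r := by
          have := Nat.mul_le_mul_right k' (show p - 1 ≤ p by omega)
          omega
        omega
      set A : ℕ := p ^ t - ((p-1) * k' + r) with hA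
      have e_A : (A:ℤ) = (p:ℤ)^t - (((p:ℤ)-1)*k' + r) := by
        rw [hA]
        push_cast [le_trans hAge (by omega : p ^ t - 1 ≤ p ^ t), hp1.le]
        ring
      have hdecompZ : (n:ℤ) = ((r:ℤ) - 1) + p * A := by
        rw [e_n, e_A, ekZ]
        ring
      have hdecomp : n = (r - 1) + p * A := by
        have h2 : (((r - 1) + p * A : ℕ) : ℤ) = ((r:ℤ) - 1) + p * A := by
          push_cast [hk0]; ring
        exact Nat.cast_inj.mp (hdecompZ.trans h2.symm)
      have hnmod : n % p = r - 1 := by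
        rw [hdecomp, Nat.add_mul_mod_self_left, Nat.mod_eq_of_lt (by omega)]
      rw [hnmod] at hmod
      rw [show (r-1).choose r = 0 from Nat.choose_eq_zero_of_lt (by omega), zero_mul] at hmod
      exact Nat.modEq_zero_iff_dvd.mp hmod


/-- Mod `p` vanishing used in the Adem relation derivation: for an odd prime `p`,
`m = (p−1)/2`, `t > 0`, `q = 2b − 2(1 + p + … + p^{t−1})` and `0 ≤ j < b`, the quantity
`y = pj − b − mq` equals `pj − b − (p−1)(b − (1+…+p^{t−1}))`, and if `y ≥ 0` then the
binomial coefficient `C((b−j) + y, b−j)` vanishes mod `p`. -/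
theorem adem_coefficient_vanishing (p : ℕ) (hp : Nat.Prime p) (hodd : Odd p)
    (t b j : ℕ) (ht : 0 < t) (hj : j < b) :
    ((p : ℤ) * j - b - (((p : ℤ) - 1) / 2) * (2 * b - 2 * ∑ s ∈ Finset.range t, (p : ℤ) ^ s)
        = (p : ℤ) * j - b - ((p : ℤ) - 1) * ((b : ℤ) - ∑ s ∈ Finset.range t, (p : ℤ) ^ s)) ∧
    (∀ y : ℤ,
      y = (p : ℤ) * j - b
            - (((p : ℤ) - 1) / 2) * (2 * b - 2 * ∑ s ∈ Finset.range t, (p : ℤ) ^ s) →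
      0 ≤ y → Nat.choose ((b - j) + y.toNat) (b - j) ≡ 0 [MOD p]) := by
  obtain ⟨c, hc⟩ := hodd
  have h2 : ((p : ℤ) - 1) / 2 * 2 = (p : ℤ) - 1 := by
    have : ((p : ℤ) - 1) = 2 * c := by push_cast [hc]; ring
    rw [this]
    omega
  have hmain : ∀ S : ℤ, (p : ℤ) * j - b - (((p : ℤ) - 1) / 2) * (2 * b - 2 * S)
      = (p : ℤ) * j - b - ((p : ℤ) - 1) * ((b : ℤ) - S) := by
    intro S
    have : (2 * (b : ℤ) - 2 * S) = ((b : ℤ) - S) * 2 := by ring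
    rw [this, ← mul_assoc, mul_right_comm, h2]
  refine ⟨hmain _, ?_⟩
  intro y hy hy0
  set S : ℤ := ∑ s ∈ Finset.range t, (p : ℤ) ^ s with hS
  have hgeom : ((p : ℤ) - 1) * S = (p : ℤ) ^ t - 1 := by
    rw [hS, mul_comm]
    exact geom_sum_mul _ _
  set k : ℕ := b - j with hk
  have hk1 : 1 ≤ k := by omega
  have hkZ : (k : ℤ) = (b : ℤ) - j := by push_cast [hk, le_of_lt hj]; ring
  have hyval : y = (p : ℤ) ^ t - 1 - (p : ℤ) * k := by
    rw [hy, hmain, hkZ]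
    linarith [hgeom]
  have hp1 : 1 < p := hp.one_lt
  have hpt : 1 ≤ p ^ t := Nat.one_le_pow _ _ (by omega)
  have hbound : p * k ≤ p ^ t - 1 := by
    have : (↑(p * k) : ℤ) ≤ ((p ^ t - 1 : ℕ) : ℤ) := by
      push_cast [hpt]
      linarith [hy0, hyval]
    exact_mod_cast this
  have hkp : (p - 1) * k ≤ p ^ t - 1 := by
    have h1 : (p - 1) * k ≤ p * k := Nat.mul_le_mul_right k (by omega)
    omega
  have hy' : (y.toNat : ℤ) = y := Int.toNat_of_nonneg hy0
  have hsum : k + y.toNat = p ^ t - 1 - (p - 1) * k := by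
    have hL : ((k + y.toNat : ℕ) : ℤ) = (p:ℤ)^t - 1 - ((p:ℤ)-1) * k := by
      push_cast
      rw [hy', hyval]
      ring
    have hR : ((p ^ t - 1 - (p - 1) * k : ℕ) : ℤ) = (p:ℤ)^t - 1 - ((p:ℤ)-1) * k := by
      push_cast [hkp, hpt, hp1.le]
      ring
    exact Nat.cast_inj.mp (hL.trans hR.symm)
  rw [hsum]
  exact Nat.modEq_zero_iff_dvd.mpr (key p hp t k hk1 hbound)
end
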